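/- Let k be a field, G a finite group, and β a normalized 3-cocycle on G with values in kˣ. The k-linear map S : D^β(k[G]) → D^β(k[G]) defined on basis elements by S(⟨g,x⟩) = (θ_{g⁻¹}(x,x⁻¹) · γ_x(g,g⁻¹))⁻¹ · ⟨x⁻¹g⁻¹x, x⁻¹⟩ is a unital algebra anti-homomorphism: S(a·b) = S(b)·S(a) for all a,b ∈ D^β(k[G]) and S maps the identity to the identity. -/

import Mathlib

/-!
`S` sends the basis element `⟨g,x⟩` to `c(g,x)⁻¹ ⟨x⁻¹g⁻¹x, x⁻¹⟩`, where
`c(g,x) = θ_{g⁻¹}(x,x⁻¹) γ_x(g,g⁻¹)`, and `(g,x) ↦ (x⁻¹g⁻¹x, x⁻¹)` is an involution of `G × G`.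
Comparing coefficients, `S(⟨g,x⟩⟨h,y⟩) = S⟨h,y⟩ S⟨g,x⟩` for `h = x⁻¹gx` becomes the scalar identity
`θ_g(x,y) c(h,y) c(g,x) = c(g,xy) θ_{(xy)⁻¹g⁻¹xy}(y⁻¹,x⁻¹)`.
Two consequences of the cocycle condition give it: each `θ_g` is a twisted 2-cocycle,
`θ_g(x,y) θ_g(xy,z) = θ_{x⁻¹gx}(y,z) θ_g(x,yz)`, and `θ` is compatible with `γ`,
`θ_g(x,y) θ_h(x,y) γ_x(g,h) γ_y(x⁻¹gx,x⁻¹hx) = θ_{gh}(x,y) γ_{xy}(g,h)`.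
The latter at `h = g⁻¹` expresses `γ_{xy}(g,g⁻¹)` through `γ_x` and `γ_y`, and the former at
`(x, y, y⁻¹)` and `(xy, y⁻¹, x⁻¹)` matches the remaining `θ_{g⁻¹}` factors.
Normalization of `β` gives `c(g,e) = 1`, whence `S(1) = 1`.
-/

open scoped BigOperators TensorProduct

namespace StringyOrbifold

/-- A normalized 3-cocycle on `G` with values in `kˣ`. -/
def IsNormalized3Cocycle {k G : Type*} [Field k] [Group G] (β : G → G → G → kˣ) : Prop :=
  (∀ g h l m : G, β g h l * β g (h * l) m * β h l m = β (g * h) l m * β g h (l * m)) ∧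
  (∀ g h : G, β 1 g h = 1 ∧ β g 1 h = 1 ∧ β g h 1 = 1)

/-- A normalized 2-cocycle on `G` with values in `kˣ`. -/
def IsNormalized2Cocycle {k G : Type*} [Field k] [Group G] (α : G → G → kˣ) : Prop :=
  (∀ g h l : G, α g h * α (g * h) l = α h l * α g (h * l)) ∧
  (∀ g : G, α g 1 = 1 ∧ α 1 g = 1)

/-- `θ_g(x,y) = β(g,x,y)·β(x,y,(xy)⁻¹g(xy)) / β(x,x⁻¹gx,y)`. -/
def ddTheta {k G : Type*} [Field k] [Group G] (β : G → G → G → kˣ) (g x y : G) : kˣ :=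
  β g x y * β x y ((x * y)⁻¹ * g * (x * y)) / β x (x⁻¹ * g * x) y

/-- `γ_x(g₁,g₂) = β(g₁,g₂,x)·β(x,x⁻¹g₁x,x⁻¹g₂x) / β(g₁,x,x⁻¹g₂x)`. -/
def ddGamma {k G : Type*} [Field k] [Group G] (β : G → G → G → kˣ) (x g1 g2 : G) : kˣ :=
  β g1 g2 x * β x (x⁻¹ * g1 * x) (x⁻¹ * g2 * x) / β g1 x (x⁻¹ * g2 * x)

/-- The trivial 3-cocycle. -/
def trivCocycle (k G : Type*) [Field k] [Group G] : G → G → G → kˣ := fun _ _ _ => 1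

/-- The underlying `k`-vector space of the twisted Drinfel'd double `D^β(k[G])`:
the free `k`-module on the basis `⟨g,x⟩`, `(g,x) ∈ G × G`, realized as functions. -/
abbrev DD (k G : Type*) := G × G → k

/-- The function model for `D^β(k[G]) ⊗ D^β(k[G])`. -/
abbrev DD2 (k G : Type*) := (G × G) × (G × G) → k

/-- The function model for the threefold tensor power of `D^β(k[G])`. -/
abbrev DD3 (k G : Type*) := (G × G) × (G × G) × (G × G) → k

/-- The basis element `⟨g,x⟩` of `D^β(k[G])`. -/
def ddBasis {k G : Type*} [Field k] [DecidableEq G] (g x : G) : DD k G :=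
  fun p => if p = (g, x) then 1 else 0

/-- The multiplication of `D^β(k[G])`, the bilinear extension of
`⟨g,x⟩·⟨h,y⟩ = δ_{g,xhx⁻¹} θ_g(x,y) ⟨g,xy⟩`. -/
def ddMul {k G : Type*} [Field k] [Group G] [Fintype G]
    (β : G → G → G → kˣ) (a b : DD k G) : DD k G :=
  fun p => ∑ x : G, a (p.1, x) * b (x⁻¹ * p.1 * x, x⁻¹ * p.2) * (ddTheta β p.1 x (x⁻¹ * p.2) : k)

/-- The identity `Σ_{h∈G} ⟨h,e⟩` of `D^β(k[G])`. -/
def ddOne (k G : Type*) [Field k] [Group G] [Fintype G] [DecidableEq G] : DD k G :=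
  ∑ g : G, ddBasis g 1

/-- The elementary tensor `a ⊗ b` in the function model of `D^β(k[G]) ⊗ D^β(k[G])`. -/
def ddTensor {k G : Type*} [Field k] (a b : DD k G) : DD2 k G :=
  fun p => a p.1 * b p.2

/-- The elementary tensor `a ⊗ b ⊗ c` in the function model of the triple tensor power. -/
def ddTensor3 {k G : Type*} [Field k] (a b c : DD k G) : DD3 k G :=
  fun p => a p.1 * b p.2.1 * c p.2.2

/-- Componentwise multiplication on `D^β(k[G]) ⊗ D^{β'}(k[G])` in the function model. -/
def dd2Mul {k G : Type*} [Field k] [Group G] [Fintype G]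
    (β β' : G → G → G → kˣ) (a b : DD2 k G) : DD2 k G :=
  fun p => ∑ x : G, ∑ y : G,
    a ((p.1.1, x), (p.2.1, y)) *
      b ((x⁻¹ * p.1.1 * x, x⁻¹ * p.1.2), (y⁻¹ * p.2.1 * y, y⁻¹ * p.2.2)) *
      (ddTheta β p.1.1 x (x⁻¹ * p.1.2) : k) * (ddTheta β' p.2.1 y (y⁻¹ * p.2.2) : k)

/-- Componentwise multiplication on the threefold tensor power of `D^β(k[G])`. -/
def dd3Mul {k G : Type*} [Field k] [Group G] [Fintype G]
    (β : G → G → G → kˣ) (a b : DD3 k G) : DD3 k G :=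
  fun p => ∑ x : G, ∑ y : G, ∑ z : G,
    a ((p.1.1, x), (p.2.1.1, y), (p.2.2.1, z)) *
      b ((x⁻¹ * p.1.1 * x, x⁻¹ * p.1.2), (y⁻¹ * p.2.1.1 * y, y⁻¹ * p.2.1.2),
        (z⁻¹ * p.2.2.1 * z, z⁻¹ * p.2.2.2)) *
      (ddTheta β p.1.1 x (x⁻¹ * p.1.2) : k) * (ddTheta β p.2.1.1 y (y⁻¹ * p.2.1.2) : k) *
      (ddTheta β p.2.2.1 z (z⁻¹ * p.2.2.2) : k)

/-- The comultiplication of `D^β(k[G])`: the linear extension of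
`Δ(⟨g,x⟩) = Σ_{g₁g₂=g} γ_x(g₁,g₂) ⟨g₁,x⟩ ⊗ ⟨g₂,x⟩`. -/
def ddComul {k G : Type*} [Field k] [Group G] [DecidableEq G]
    (β : G → G → G → kˣ) (a : DD k G) : DD2 k G :=
  fun p =>
    if p.1.2 = p.2.2 then (ddGamma β p.1.2 p.1.1 p.2.1 : k) * a (p.1.1 * p.2.1, p.1.2) else 0

/-- The map `id ⊗ Δ` from `D^β(k[G])^{⊗2}` to `D^β(k[G])^{⊗3}` in the function model. -/
def idTensorComul {k G : Type*} [Field k] [Group G] [DecidableEq G]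
    (β : G → G → G → kˣ) (u : DD2 k G) : DD3 k G :=
  fun p => if p.2.1.2 = p.2.2.2 then
      (ddGamma β p.2.1.2 p.2.1.1 p.2.2.1 : k) * u (p.1, (p.2.1.1 * p.2.2.1, p.2.1.2))
    else 0

/-- The map `Δ ⊗ id` from `D^β(k[G])^{⊗2}` to `D^β(k[G])^{⊗3}` in the function model. -/
def comulTensorId {k G : Type*} [Field k] [Group G] [DecidableEq G]
    (β : G → G → G → kˣ) (u : DD2 k G) : DD3 k G :=
  fun p => if p.1.2 = p.2.1.2 then
      (ddGamma β p.1.2 p.1.1 p.2.1.1 : k) * u ((p.1.1 * p.2.1.1, p.1.2), p.2.2)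
    else 0

/-- The flip of the two tensor factors. -/
def ddSwap {k G : Type*} (u : DD2 k G) : DD2 k G := fun p => u (p.2, p.1)

/-- The counit `ε(⟨g,x⟩) = δ_{g,e}` of `D^β(k[G])`. -/
def ddCounit {k G : Type*} [Field k] [Group G] [Fintype G] (a : DD k G) : k :=
  ∑ x : G, a (1, x)

/-- The injection `k[G]^* → D^β(k[G])`, `δ_g ↦ ⟨g,e⟩`. -/
def ddIota {k G : Type*} [Field k] [Group G] [DecidableEq G] (f : G → k) : DD k G :=
  fun p => if p.2 = 1 then f p.1 else 0

/-- The diagonal map `D^{ββ'}(k[G]) → D^β(k[G]) ⊗ D^{β'}(k[G])`, `⟨g,x⟩ ↦ ⟨g,x⟩ ⊗ ⟨g,x⟩`. -/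
def ddDiag {k G : Type*} [Field k] [DecidableEq G] (a : DD k G) : DD2 k G :=
  fun p => if p.1 = p.2 then a p.1 else 0

/-- The antipode of `D^β(k[G])`: the linear extension of
`S(⟨g,x⟩) = (θ_{g⁻¹}(x,x⁻¹)·γ_x(g,g⁻¹))⁻¹ ⟨x⁻¹g⁻¹x, x⁻¹⟩`. -/
def ddAntipode {k G : Type*} [Field k] [Group G] (β : G → G → G → kˣ) (a : DD k G) : DD k G :=
  fun p =>
    (((ddTheta β (p.2⁻¹ * p.1 * p.2) p.2⁻¹ p.2 *
        ddGamma β p.2⁻¹ (p.2⁻¹ * p.1⁻¹ * p.2) (p.2⁻¹ * p.1 * p.2))⁻¹ : kˣ) : k) *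
      a (p.2⁻¹ * p.1⁻¹ * p.2, p.2⁻¹)

/-- The antipode of the untwisted double `D(k[G])`: `S(⟨g,x⟩) = ⟨x⁻¹g⁻¹x, x⁻¹⟩`. -/
def ddAntipode0 {k G : Type*} [Field k] [Group G] (a : DD k G) : DD k G :=
  fun p => a (p.2⁻¹ * p.1⁻¹ * p.2, p.2⁻¹)

/-- The operator `φ(x)` on `D^β(k[G])^{comm}`: the linear extension of
`φ(x)(⟨h,y⟩) = (θ_{xhx⁻¹}(x,y)/θ_{xhx⁻¹}(xyx⁻¹,x))·⟨xhx⁻¹, xyx⁻¹⟩`. -/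
def ddPhi {k G : Type*} [Field k] [Group G] (β : G → G → G → kˣ) (x : G) (a : DD k G) :
    DD k G :=
  fun p => ((ddTheta β p.1 x (x⁻¹ * p.2 * x) / ddTheta β p.1 p.2 x : kˣ) : k) *
    a (x⁻¹ * p.1 * x, x⁻¹ * p.2 * x)

/-- The span of the basis elements `⟨g,x⟩` with `gx = xg`, i.e. `D^β(k[G])^{comm}`. -/
def ddCommSpan (k G : Type*) [Field k] [Group G] [DecidableEq G] : Submodule k (DD k G) :=
  Submodule.span k {v : DD k G | ∃ g x : G, g * x = x * g ∧ v = ddBasis g x}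

/-- The underlying space of the twisted group ring `k^α[G]`. -/
abbrev TG (k G : Type*) := G → k

/-- The basis element `1_g` of `k^α[G]`. -/
def tgBasis {k G : Type*} [Field k] [DecidableEq G] (g : G) : TG k G :=
  fun z => if z = g then 1 else 0

/-- The multiplication `1_g·1_h = α(g,h) 1_{gh}` of the twisted group ring `k^α[G]`. -/
def tgMul {k G : Type*} [Field k] [Group G] [Fintype G] (α : G → G → kˣ) (a b : TG k G) :
    TG k G :=
  fun z => ∑ x : G, a x * b (x⁻¹ * z) * (α x (x⁻¹ * z) : k)

/-- The identity `1_e` of `k^α[G]`. -/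
def tgOne (k G : Type*) [Field k] [Group G] [DecidableEq G] : TG k G := tgBasis 1

/-- The inverse `α(g,g⁻¹)⁻¹·1_{g⁻¹}` of the basis element `1_g` in `k^α[G]`. -/
def tgInvBasis {k G : Type*} [Field k] [Group G] [DecidableEq G] (α : G → G → kˣ) (g : G) :
    TG k G :=
  (((α g g⁻¹)⁻¹ : kˣ) : k) • tgBasis g⁻¹

/-- Conjugation `ρ(g)(a) = 1_g · a · (1_g)⁻¹` in the twisted group ring `k^α[G]`. -/
def tgConj {k G : Type*} [Field k] [Group G] [Fintype G] [DecidableEq G]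
    (α : G → G → kˣ) (g : G) (a : TG k G) : TG k G :=
  tgMul α (tgBasis g) (tgMul α a (tgInvBasis α g))

theorem comm_inv_left {G : Type*} [Group G] {g x : G} (h : x * g = g * x) :
    x⁻¹ * g = g * x⁻¹ := by
  rw [eq_mul_inv_iff_mul_eq, mul_assoc, ← h, ← mul_assoc, inv_mul_cancel, one_mul]

theorem comm_inv_mul {G : Type*} [Group G] {g x z : G} (hx : x * g = g * x)
    (hz : z * g = g * z) : (x⁻¹ * z) * g = g * (x⁻¹ * z) := by
  rw [mul_assoc, hz, ← mul_assoc, comm_inv_left hx, mul_assoc]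

/-- The index set `{(g,x) : x ∈ Z(g)}` of the direct sum `⊕_g k^{θ_g}[Z(g)]`. -/
abbrev CentPairs (G : Type*) [Group G] := Σ g : G, {x : G // x * g = g * x}

/-- The underlying space of `⊕_g k^{θ_g}[Z(g)]`. -/
abbrev TY (k G : Type*) [Group G] := CentPairs G → k

/-- The multiplication of `⊕_g k^{θ_g}[Z(g)]`: in the `g`-th summand,
`1_x·1_y = θ_g(x,y)·1_{xy}` for `x, y ∈ Z(g)`, and distinct summands multiply to `0`. -/
def tyMul {k G : Type*} [Field k] [Group G] [Fintype G] [DecidableEq G]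
    (β : G → G → G → kˣ) (a b : TY k G) : TY k G :=
  fun q => ∑ x : {x : G // x * q.1 = q.1 * x},
    a ⟨q.1, x⟩ * b ⟨q.1, ⟨(x : G)⁻¹ * (q.2 : G), comm_inv_mul x.2 q.2.2⟩⟩ *
      (ddTheta β q.1 (x : G) ((x : G)⁻¹ * (q.2 : G)) : k)

/-- The identity of `⊕_g k^{θ_g}[Z(g)]`. -/
def tyOne (k G : Type*) [Field k] [Group G] [DecidableEq G] : TY k G :=
  fun q => if (q.2 : G) = 1 then 1 else 0

/-- The map `⊕_g k^{θ_g}[Z(g)] → D^β(k[G])` sending `1_x` in the `g`-th summand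
to `⟨g,x⟩`. -/
def tyMap {k G : Type*} [Field k] [Group G] [DecidableEq G] (f : TY k G) : DD k G :=
  fun p => if h : p.2 * p.1 = p.1 * p.2 then f ⟨p.1, ⟨p.2, h⟩⟩ else 0

/-- The action of `D^{ββ'}(k[G])` on `A ⊗ B`, assigning to `⟨g,x⟩` the endomorphism
`ρ_A(⟨g,x⟩) ⊗ ρ_B(⟨g,x⟩)` and extending linearly. -/
noncomputable def ddTensorAction {k G A B : Type*} [Field k] [Group G] [Fintype G]
    [DecidableEq G] [AddCommGroup A] [Module k A] [AddCommGroup B] [Module k B]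
    (ρA : DD k G → (A →ₗ[k] A)) (ρB : DD k G → (B →ₗ[k] B)) (a : DD k G) :
    (A ⊗[k] B) →ₗ[k] (A ⊗[k] B) :=
  ∑ p : G × G, a p • TensorProduct.map (ρA (ddBasis p.1 p.2)) (ρB (ddBasis p.1 p.2))

section Antipode

variable {k G : Type*} [Field k] [Group G] {β : G → G → G → kˣ}

theorem ddTheta_one_left (hβ : IsNormalized3Cocycle β) (x y : G) : ddTheta β 1 x y = 1 := by
  simp [ddTheta, hβ.2]

theorem ddTheta_one_right (hβ : IsNormalized3Cocycle β) (g x : G) : ddTheta β g x 1 = 1 := by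
  simp [ddTheta, hβ.2]

theorem ddTheta_mul_ddTheta (hβ : IsNormalized3Cocycle β) (g x y z : G) :
    ddTheta β g x y * ddTheta β g (x * y) z =
      ddTheta β (x⁻¹ * g * x) y z * ddTheta β g x (y * z) := by
  have c₁ := congrArg Additive.ofMul (hβ.1 g x y z)
  have c₂ := congrArg Additive.ofMul (hβ.1 x (x⁻¹ * g * x) y z)
  have c₃ := congrArg Additive.ofMul (hβ.1 x y ((x * y)⁻¹ * g * (x * y)) z)
  have c₄ := congrArg Additive.ofMul (hβ.1 x y z ((x * y * z)⁻¹ * g * (x * y * z)))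
  -- Identities in the abelian group `kˣ` are checked additively, where `linear_combination` applies.
  apply Additive.ofMul.injective
  simp only [ddTheta, ofMul_mul, ofMul_div, mul_assoc, mul_inv_rev, mul_inv_cancel_left]
    at c₁ c₂ c₃ c₄ ⊢
  linear_combination (norm := abel) c₁ - c₂ + c₃ - c₄

theorem ddTheta_mul_ddTheta_mul_ddGamma_mul_ddGamma (hβ : IsNormalized3Cocycle β)
    (g h x y : G) :
    ddTheta β g x y * ddTheta β h x y * ddGamma β x g h *
        ddGamma β y (x⁻¹ * g * x) (x⁻¹ * h * x) =
      ddTheta β (g * h) x y * ddGamma β (x * y) g h := by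
  have c₁ := congrArg Additive.ofMul (hβ.1 g h x y)
  have c₂ := congrArg Additive.ofMul (hβ.1 g x (x⁻¹ * h * x) y)
  have c₃ := congrArg Additive.ofMul (hβ.1 x (x⁻¹ * g * x) (x⁻¹ * h * x) y)
  have c₄ := congrArg Additive.ofMul (hβ.1 g x y ((x * y)⁻¹ * h * (x * y)))
  have c₅ := congrArg Additive.ofMul (hβ.1 x (x⁻¹ * g * x) y ((x * y)⁻¹ * h * (x * y)))
  have c₆ := congrArg Additive.ofMul
    (hβ.1 x y ((x * y)⁻¹ * g * (x * y)) ((x * y)⁻¹ * h * (x * y)))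
  apply Additive.ofMul.injective
  simp only [ddTheta, ddGamma, ofMul_mul, ofMul_div, mul_assoc, mul_inv_rev, mul_inv_cancel_left]
    at c₁ c₂ c₃ c₄ c₅ c₆ ⊢
  linear_combination (norm := abel) c₁ - c₂ + c₃ + c₄ - c₅ + c₆

def antipodeCoeff (β : G → G → G → kˣ) (p : G × G) : kˣ :=
  ddTheta β p.1⁻¹ p.2 p.2⁻¹ * ddGamma β p.2 p.1 p.1⁻¹

theorem antipodeCoeff_one_right (hβ : IsNormalized3Cocycle β) (g : G) :
    antipodeCoeff β (g, 1) = 1 := by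
  simp [antipodeCoeff, ddTheta, ddGamma, hβ.2]

theorem ddTheta_mul_antipodeCoeff_mul_antipodeCoeff (hβ : IsNormalized3Cocycle β) (g x y : G) :
    ddTheta β g x y * antipodeCoeff β (x⁻¹ * g * x, y) * antipodeCoeff β (g, x) =
      antipodeCoeff β (g, x * y) * ddTheta β ((x * y)⁻¹ * g⁻¹ * (x * y)) y⁻¹ x⁻¹ := by
  have hγ := congrArg Additive.ofMul (ddTheta_mul_ddTheta_mul_ddGamma_mul_ddGamma hβ g g⁻¹ x y)
  have h₁ := congrArg Additive.ofMul (ddTheta_mul_ddTheta hβ g⁻¹ x y y⁻¹)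
  have h₂ := congrArg Additive.ofMul (ddTheta_mul_ddTheta hβ g⁻¹ (x * y) y⁻¹ x⁻¹)
  apply Additive.ofMul.injective
  simp only [antipodeCoeff, ofMul_mul, mul_assoc, mul_inv_rev, inv_inv, mul_inv_cancel,
    mul_one, ddTheta_one_left hβ, ddTheta_one_right hβ, ofMul_one, zero_add] at hγ h₁ h₂ ⊢
  linear_combination (norm := abel) hγ - h₁ + h₂

def antipodeFlip (p : G × G) : G × G := (p.2⁻¹ * p.1⁻¹ * p.2, p.2⁻¹)

theorem antipodeFlip_involutive : Function.Involutive (antipodeFlip (G := G)) := by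
  rintro ⟨g, x⟩
  simp [antipodeFlip, mul_assoc]

theorem ddAntipode_apply (a : DD k G) (p : G × G) :
    ddAntipode β a p = ((antipodeCoeff β (antipodeFlip p))⁻¹ : kˣ) * a (antipodeFlip p) := by
  simp [ddAntipode, antipodeCoeff, antipodeFlip, mul_assoc]

theorem ddAntipode_ddBasis [DecidableEq G] (g x : G) :
    ddAntipode β (ddBasis g x) =
      (((antipodeCoeff β (g, x))⁻¹ : kˣ) : k) • ddBasis (x⁻¹ * g⁻¹ * x) x⁻¹ := by
  funext p
  rw [ddAntipode_apply, Pi.smul_apply, smul_eq_mul]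
  change _ * ite (antipodeFlip p = (g, x)) _ _ = _ * ite (p = antipodeFlip (g, x)) _ _
  simp only [antipodeFlip_involutive.eq_iff]
  split_ifs with h
  · rw [h, antipodeFlip_involutive]
  · rw [mul_zero, mul_zero]

theorem ddAntipode_ddMul [Fintype G] (hβ : IsNormalized3Cocycle β) (a b : DD k G) :
    ddAntipode β (ddMul β a b) = ddMul β (ddAntipode β b) (ddAntipode β a) := by
  funext p
  obtain ⟨⟨g, w⟩, rfl⟩ := antipodeFlip_involutive.surjective p
  simp only [ddAntipode_apply, antipodeFlip_involutive _, ddMul, Finset.mul_sum]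
  refine Fintype.sum_equiv (Equiv.mulLeft w⁻¹) _ _ fun x => ?_
  have hg : antipodeFlip (g, w) = (w⁻¹ * g⁻¹ * w, w⁻¹) := rfl
  have hx : (w⁻¹ * x)⁻¹ * w⁻¹ = x⁻¹ := by group
  have hb : antipodeFlip (w⁻¹ * g⁻¹ * w, w⁻¹ * x) = (x⁻¹ * g * x, x⁻¹ * w) := by
    simp [antipodeFlip, mul_assoc]
  have ha : antipodeFlip ((w⁻¹ * x)⁻¹ * (w⁻¹ * g⁻¹ * w) * (w⁻¹ * x), x⁻¹) = (g, x) := by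
    simp [antipodeFlip, mul_assoc]
  have key := congrArg Units.val (ddTheta_mul_antipodeCoeff_mul_antipodeCoeff hβ g x (x⁻¹ * w))
  simp only [mul_inv_cancel_left, mul_inv_rev, inv_inv, Units.val_mul] at key
  simp only [Equiv.coe_mulLeft, hg, hx, hb, ha, Units.val_inv_eq_inv_val]
  field_simp
  linear_combination a (g, x) * b (x⁻¹ * g * x, x⁻¹ * w) * key

theorem ddOne_apply [Fintype G] [DecidableEq G] (p : G × G) :
    ddOne k G p = if p.2 = 1 then 1 else 0 := by
  obtain ⟨g, x⟩ := p
  by_cases hx : x = 1 <;> simp [ddOne, ddBasis, Finset.sum_apply, hx]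

theorem ddAntipode_ddOne [Fintype G] [DecidableEq G] (hβ : IsNormalized3Cocycle β) :
    ddAntipode β (ddOne k G) = ddOne k G := by
  funext p
  rw [ddAntipode_apply, ddOne_apply, ddOne_apply]
  obtain ⟨g, x⟩ := p
  by_cases hx : x = 1
  · simp [hx, antipodeFlip, antipodeCoeff_one_right hβ]
  · simp [hx, antipodeFlip]

end Antipode

/-- the antipode `S` of `D^β(k[G])` is a unital algebra
anti-homomorphism. -/
theorem stmt18 {k G : Type*} [Field k] [Group G] [Fintype G] [DecidableEq G]
    (β : G → G → G → kˣ) (hβ : IsNormalized3Cocycle β) :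
    (∀ g x : G, ddAntipode β (ddBasis g x) =
      (((ddTheta β g⁻¹ x x⁻¹ * ddGamma β x g g⁻¹)⁻¹ : kˣ) : k) •
        ddBasis (x⁻¹ * g⁻¹ * x) x⁻¹) ∧
    (∀ a b : DD k G, ddAntipode β (a + b) = ddAntipode β a + ddAntipode β b) ∧
    (∀ (c : k) (a : DD k G), ddAntipode β (c • a) = c • ddAntipode β a) ∧
    (∀ a b : DD k G,
      ddAntipode β (ddMul β a b) = ddMul β (ddAntipode β b) (ddAntipode β a)) ∧
    ddAntipode β (ddOne k G) = ddOne k G := by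
  refine ⟨ddAntipode_ddBasis, fun a b => ?_, fun c a => ?_, ddAntipode_ddMul hβ,
    ddAntipode_ddOne hβ⟩
  · funext p
    simp only [ddAntipode_apply, Pi.add_apply, mul_add]
  · funext p
    simp only [ddAntipode_apply, Pi.smul_apply, smul_eq_mul, mul_left_comm]

end StringyOrbifold
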